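/- Let D, N ∈ ℕ, let M ⊆ ℝ^D be an open set, let W : Fin N → (ℝ^D → ℝ^D) be vector fields each infinitely differentiable on M, and let d : Fin N → ℝ with 1 ≤ d j for every j (formal degrees). Assume W₁(x), …, W_N(x) span ℝ^D for every x ∈ M. Then for every x ∈ M and every ε > 0 there exists an open set U with x ∈ U ⊆ M such that F(x, y, ε) holds for every y ∈ U; in particular ρ_F(x, y) → 0 as y → x in the Euclidean topology. -/

import Mathlib

open Set Metric Filter Topology

/-- The chain predicate `F(x, y, δ)`: there is a finite chain of smooth maps
`f i : B(0,1/2) ⊆ ℝ → M`, each a flow-type curve of the scaled vector fields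
`(δ' i)^{d j} • W j` with coefficient functions of ℓ²-size `< 1`, with consecutive images
meeting, the total scale `∑ δ' i ≤ δ`, `x` in the first image and `y` in the last. -/
def ChainF {D N : ℕ} (M : Set (EuclideanSpace ℝ (Fin D)))
    (W : Fin N → EuclideanSpace ℝ (Fin D) → EuclideanSpace ℝ (Fin D))
    (d : Fin N → ℝ) (x y : EuclideanSpace ℝ (Fin D)) (δ : ℝ) : Prop :=
  ∃ (K : ℕ) (f : ℕ → ℝ → EuclideanSpace ℝ (Fin D)) (δ' : ℕ → ℝ)
    (s : ℕ → ℝ → Fin N → ℝ) (c : ℝ),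
    1 ≤ K ∧ c < 1 ∧
    (∀ i < K, 0 < δ' i) ∧
    (∑ i ∈ Finset.range K, δ' i) ≤ δ ∧
    (∀ i < K, Set.MapsTo (f i) (Metric.ball (0 : ℝ) (1 / 2)) M) ∧
    (∀ i < K, ContDiffOn ℝ (⊤ : ℕ∞) (f i) (Metric.ball (0 : ℝ) (1 / 2))) ∧
    (∀ i < K, ∀ t ∈ Metric.ball (0 : ℝ) (1 / 2),
      (∑ j, (s i t j) ^ 2) ≤ c ∧
      HasDerivAt (f i) (∑ j, s i t j • (((δ' i) ^ (d j)) • W j (f i t))) t) ∧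
    (∀ i, i + 1 < K →
      ((f i '' Metric.ball (0 : ℝ) (1 / 2)) ∩
        (f (i + 1) '' Metric.ball (0 : ℝ) (1 / 2))).Nonempty) ∧
    x ∈ f 0 '' Metric.ball (0 : ℝ) (1 / 2) ∧
    y ∈ f (K - 1) '' Metric.ball (0 : ℝ) (1 / 2)

set_option maxHeartbeats 1000000 in
/-- `ρ_F(x, y) → 0` as `y → x`.  Let `M ⊆ ℝ^D` be open, let
`W₁, …, W_N` be vector fields smooth on `M` spanning `ℝ^D` at every point of `M`, with
formal degrees `d j ≥ 1`.  Then for every `x ∈ M` and `ε > 0` there is an open set `U` with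
`x ∈ U ⊆ M` such that `F(x, y, ε)` holds for all `y ∈ U`. -/
theorem chainF_holds_near
    (D N : ℕ) (M : Set (EuclideanSpace ℝ (Fin D))) (hM : IsOpen M)
    (W : Fin N → EuclideanSpace ℝ (Fin D) → EuclideanSpace ℝ (Fin D))
    (hW : ∀ j, ContDiffOn ℝ (⊤ : ℕ∞) (W j) M)
    (d : Fin N → ℝ) (hd : ∀ j, 1 ≤ d j)
    (hspan : ∀ x ∈ M, Submodule.span ℝ (Set.range fun j => W j x) = ⊤) :
    ∀ x ∈ M, ∀ ε : ℝ, 0 < ε →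
      ∃ U : Set (EuclideanSpace ℝ (Fin D)),
        IsOpen U ∧ x ∈ U ∧ U ⊆ M ∧ ∀ y ∈ U, ChainF M W d x y ε := by
  classical
  intro x hx ε hε
  let E := EuclideanSpace ℝ (Fin D)
  -- the scale
  set δ₀ : ℝ := min ε 1 with hδ₀def
  have hδ₀ : 0 < δ₀ := lt_min hε one_pos
  set b : Fin N → ℝ := fun j => δ₀ ^ (d j) with hbdef
  have hb : ∀ j, 0 < b j := fun j => Real.rpow_pos_of_pos hδ₀ _
  -- the surjective linear map a ↦ ∑ aⱼ • (bⱼ • Wⱼ x)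
  let Φ : (Fin N → ℝ) →ₗ[ℝ] E :=
    ∑ j, (LinearMap.proj j : (Fin N → ℝ) →ₗ[ℝ] ℝ).smulRight (b j • W j x)
  have hΦ : ∀ a, Φ a = ∑ j, a j • (b j • W j x) := by
    intro a; simp [Φ, LinearMap.sum_apply]
  have hsurj : LinearMap.range Φ = ⊤ := by
    rw [eq_top_iff, ← hspan x hx, Submodule.span_le]
    rintro - ⟨j, rfl⟩
    refine ⟨Pi.single j (b j)⁻¹, ?_⟩
    rw [hΦ, Finset.sum_eq_single j]
    · simp [Pi.single_apply, smul_smul, inv_mul_cancel₀ (hb j).ne']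
    · intro k _ hk; simp [Pi.single_apply, hk]
    · simp
  obtain ⟨S, hS⟩ := Φ.exists_rightInverse_of_surjective hsurj
  let S' : E →L[ℝ] (Fin N → ℝ) := LinearMap.toContinuousLinearMap S
  -- the family of operators z ↦ (w ↦ ∑ (S w)ⱼ • (bⱼ • Wⱼ z)), equal to 1 at z = x
  let G : E → (E →L[ℝ] E) := fun z =>
    ∑ j, ContinuousLinearMap.smulRightL ℝ E E ((ContinuousLinearMap.proj j).comp S') (b j • W j z)
  have hsr : ∀ (c : E →L[ℝ] ℝ) (f : E), ContinuousLinearMap.smulRightL ℝ E E c f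
      = c.smulRight f := fun c f => rfl
  have hG : ∀ z w, G z w = ∑ j, (S w) j • (b j • W j z) := by
    intro z w
    simp only [G, ContinuousLinearMap.sum_apply, hsr,
      ContinuousLinearMap.smulRight_apply, ContinuousLinearMap.coe_comp', Function.comp_apply,
      ContinuousLinearMap.proj_apply, S', LinearMap.coe_toContinuousLinearMap']
  have hGx : G x = 1 := by
    ext w
    rw [hG, ← hΦ (S w)]
    have : Φ (S w) = w := by simpa using LinearMap.congr_fun hS w
    simp [this]
  have hGcont : ContinuousAt G x := by
    apply tendsto_finset_sum
    intro j _
    exact ((ContinuousLinearMap.smulRightL ℝ E E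
      ((ContinuousLinearMap.proj j).comp S')).continuous.continuousAt).comp
      (((hW j).continuousOn.continuousAt (hM.mem_nhds hx)).const_smul (b j))
  have hunit : IsUnit (G x) := hGx ▸ isUnit_one
  have hinvcont : ContinuousAt (fun z => Ring.inverse (G z)) x := by
    have h1 := NormedRing.inverse_continuousAt hunit.unit
    have h2 : ContinuousAt Ring.inverse (G x) := by
      rw [← hunit.unit_spec]; exact h1
    exact h2.comp hGcont
  -- a good neighborhood
  have hev : ∀ᶠ z in 𝓝 x, z ∈ M ∧ IsUnit (G z) ∧ ‖Ring.inverse (G z)‖ < 2 := by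
    have e1 : ∀ᶠ z in 𝓝 x, z ∈ M := hM.mem_nhds hx
    have e2 : ∀ᶠ z in 𝓝 x, IsUnit (G z) :=
      hGcont.eventually_mem (Units.isOpen.mem_nhds hunit)
    have e3 : ∀ᶠ z in 𝓝 x, ‖Ring.inverse (G z)‖ < 2 := by
      have hc : ContinuousAt (fun z => ‖Ring.inverse (G z)‖) x := hinvcont.norm
      have hval : ‖Ring.inverse (G x)‖ < 2 := by
        rw [hGx, Ring.inverse_one]
        calc ‖(1 : E →L[ℝ] E)‖ ≤ 1 := ContinuousLinearMap.norm_id_le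
        _ < 2 := one_lt_two
      exact hc.eventually_mem (Iio_mem_nhds hval)
    filter_upwards [e1, e2, e3] with z h1 h2 h3
    exact ⟨h1, h2, h3⟩
  obtain ⟨r, hr, hball⟩ := Metric.eventually_nhds_iff_ball.mp hev
  set A : ℝ := ‖S'‖ with hAdef
  have hA : 0 ≤ A := norm_nonneg _
  set η : ℝ := min (r / 2) (1 / (12 * (N + 1) * (A + 1))) with hηdef
  have hden : (0:ℝ) < 12 * (N + 1) * (A + 1) := by positivity
  have hη : 0 < η := lt_min (by linarith) (by positivity)
  refine ⟨Metric.ball x η, Metric.isOpen_ball, Metric.mem_ball_self hη, ?_, ?_⟩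
  · intro z hz
    have : z ∈ Metric.ball x r := by
      refine Metric.mem_ball.2 (lt_of_lt_of_le (Metric.mem_ball.1 hz) ?_)
      calc η ≤ r / 2 := min_le_left _ _
      _ ≤ r := by linarith
    exact (hball _ (Metric.mem_ball.1 this)).1
  intro y hy
  set v : E := y - x with hvdef
  have hv : ‖v‖ < η := by
    rw [hvdef, ← dist_eq_norm]
    exact Metric.mem_ball.1 hy
  -- the curve and its coefficients
  set f : ℕ → ℝ → E := fun _ t => x + (4 * t) • v with hfdef
  set s : ℕ → ℝ → Fin N → ℝ :=
    fun _ t => S' (Ring.inverse (G (x + (4 * t) • v)) ((4 : ℝ) • v)) with hsdef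
  have hft : ∀ t : ℝ, t ∈ Metric.ball (0:ℝ) (1/2) → f 0 t ∈ Metric.ball x r := by
    intro t ht
    have ht' : |t| < 1/2 := by simpa [Real.dist_eq] using Metric.mem_ball.1 ht
    have : dist (f 0 t) x = |4 * t| * ‖v‖ := by
      simp [f, dist_eq_norm, norm_smul, abs_mul]
    refine Metric.mem_ball.2 ?_
    rw [this]
    have h1 : |4 * t| ≤ 2 := by rw [abs_mul]; simp only [abs_of_pos (by norm_num : (0:ℝ) < 4)]; nlinarith [abs_nonneg t]
    have h2 : ‖v‖ < r / 2 := lt_of_lt_of_le hv (min_le_left _ _)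
    nlinarith [norm_nonneg v, abs_nonneg (4 * t)]
  have hP : ∀ t : ℝ, t ∈ Metric.ball (0:ℝ) (1/2) →
      f 0 t ∈ M ∧ IsUnit (G (f 0 t)) ∧ ‖Ring.inverse (G (f 0 t))‖ < 2 :=
    fun t ht => hball _ (Metric.mem_ball.1 (hft t ht))
  refine ⟨1, f, fun _ => δ₀, s, 1/2, le_rfl, by norm_num, fun i _ => hδ₀, ?_, ?_, ?_, ?_, ?_, ?_, ?_⟩
  · rw [Finset.sum_range_one]; exact min_le_left ε 1
  · intro i hi
    interval_cases i
    exact fun t ht => (hP t ht).1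
  · intro i hi
    interval_cases i
    apply ContDiff.contDiffOn
    exact contDiff_const.add ((contDiff_const.mul contDiff_id).smul contDiff_const)
  · intro i hi
    interval_cases i
    intro t ht
    obtain ⟨hM', hu, hinv⟩ := hP t ht
    constructor
    · -- ℓ² bound on the coefficients
      have hw : ‖Ring.inverse (G (f 0 t)) ((4:ℝ) • v)‖ ≤ 2 * (4 * ‖v‖) := by
        calc ‖Ring.inverse (G (f 0 t)) ((4:ℝ) • v)‖
            ≤ ‖Ring.inverse (G (f 0 t))‖ * ‖(4:ℝ) • v‖ :=
              ContinuousLinearMap.le_opNorm _ _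
        _ ≤ 2 * (4 * ‖v‖) := by
              rw [norm_smul]
              simp only [Real.norm_ofNat]
              have : (0:ℝ) ≤ 4 * ‖v‖ := by positivity
              nlinarith [norm_nonneg ((4:ℝ) • v), ContinuousLinearMap.opNorm_nonneg (Ring.inverse (G (f 0 t)))]
      have hsn : ‖s 0 t‖ ≤ A * (8 * ‖v‖) := by
        calc ‖s 0 t‖ ≤ A * ‖Ring.inverse (G (f 0 t)) ((4:ℝ) • v)‖ :=
              ContinuousLinearMap.le_opNorm _ _
        _ ≤ A * (8 * ‖v‖) := by nlinarith
      have hsj : ∀ j, (s 0 t j) ^ 2 ≤ (A * (8 * ‖v‖)) ^ 2 := by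
        intro j
        have h1 : |s 0 t j| ≤ ‖s 0 t‖ := by
          simpa [Real.norm_eq_abs] using norm_le_pi_norm (s 0 t) j
        have h2 : |s 0 t j| ≤ A * (8 * ‖v‖) := h1.trans hsn
        calc (s 0 t j) ^ 2 = |s 0 t j| ^ 2 := (sq_abs _).symm
        _ ≤ (A * (8 * ‖v‖)) ^ 2 := by
              apply pow_le_pow_left₀ (abs_nonneg _) h2
      have hsum : (∑ j, (s 0 t j) ^ 2) ≤ (N : ℝ) * (A * (8 * ‖v‖)) ^ 2 := by
        calc (∑ j, (s 0 t j) ^ 2) ≤ ∑ _j : Fin N, (A * (8 * ‖v‖)) ^ 2 :=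
              Finset.sum_le_sum (fun j _ => hsj j)
        _ = (N : ℝ) * (A * (8 * ‖v‖)) ^ 2 := by
              simp [Finset.sum_const, mul_comm]
      refine hsum.trans ?_
      have hvη : ‖v‖ * (12 * (N + 1) * (A + 1)) ≤ 1 := by
        have h1 : ‖v‖ ≤ 1 / (12 * (N + 1) * (A + 1)) :=
          le_of_lt (lt_of_lt_of_le hv (min_le_right _ _))
        rw [le_div_iff₀ hden] at h1
        linarith
      have hNn : (0 : ℝ) ≤ (N : ℝ) := Nat.cast_nonneg N
      have ht : (0:ℝ) ≤ ‖v‖ := norm_nonneg v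
      have e1 : (0:ℝ) ≤ ‖v‖ * (12 * ((N:ℝ) + 1) * (A + 1)) := by positivity
      have e2 : (‖v‖ * (12 * ((N:ℝ) + 1) * (A + 1))) ^ 2 ≤ 1 := by nlinarith
      have key : 144 * ((((N:ℝ) + 1) ^ 2 * (A + 1) ^ 2) * ‖v‖ ^ 2) ≤ 1 := by nlinarith [e2]
      have e3a : A ^ 2 ≤ (A + 1) ^ 2 := by nlinarith
      have e3b : (N : ℝ) ≤ ((N:ℝ) + 1) ^ 2 := by nlinarith
      have e3 : (N : ℝ) * A ^ 2 ≤ ((N:ℝ) + 1) ^ 2 * (A + 1) ^ 2 :=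
        mul_le_mul e3b e3a (sq_nonneg A) (by positivity)
      have e4 : (N : ℝ) * A ^ 2 * ‖v‖ ^ 2 ≤ (((N:ℝ) + 1) ^ 2 * (A + 1) ^ 2) * ‖v‖ ^ 2 :=
        mul_le_mul_of_nonneg_right e3 (sq_nonneg _)
      have key2 : (N:ℝ) * (A * (8 * ‖v‖)) ^ 2 = 64 * ((N:ℝ) * A ^ 2 * ‖v‖ ^ 2) := by ring
      rw [key2]
      linarith
    · -- the derivative identity
      have hderiv : HasDerivAt (f 0) ((4 : ℝ) • v) t := by
        have h1 : HasDerivAt (fun u : ℝ => 4 * u) 4 t := by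
          simpa using (hasDerivAt_id t).const_mul 4
        exact (h1.smul_const v).const_add x
      have hkey : (∑ j, s 0 t j • ((δ₀ ^ (d j)) • W j (f 0 t))) = (4 : ℝ) • v := by
        have h1 : (∑ j, s 0 t j • ((δ₀ ^ (d j)) • W j (f 0 t)))
            = G (f 0 t) (Ring.inverse (G (f 0 t)) ((4:ℝ) • v)) := by
          rw [hG]
          rfl
        rw [h1, ← ContinuousLinearMap.mul_apply, Ring.mul_inverse_cancel _ hu,
          ContinuousLinearMap.one_apply]
      rw [hkey]
      exact hderiv
  · intro i hi; omega
  · exact ⟨0, by norm_num [Metric.mem_ball], by simp [f]⟩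
  · refine ⟨1/4, by norm_num [Metric.mem_ball], ?_⟩
    show x + ((4:ℝ) * (1/4)) • v = y
    rw [hvdef]
    norm_num
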